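/- arXiv:1508.00858 — 2 statements merged into one kernel-verified Lean document; each statement's English description precedes it below -/
import Mathlib

section
/- If g is 1-strongly convex in the p-norm on Q (p ∈ {1,2}), then the dual function φ(y) = min_{x∈Q} { g(x) + ⟨y, Ax − b⟩ } is concave, differentiable, with ∇φ(y) = A x(y) − b where x(y) is the unique minimizer, and −φ has L₂-Lipschitz gradient in the 2-norm with L₂ = max_{‖h‖_p ≤ 1} ‖Ah‖₂². In particular L₂ = σ_max(A) for p = 2 and L₂ = max_k ‖A^{(k)}‖₂² for p = 1. -/
/-!
For fixed `y`, the Lagrangian `x ↦ g x + ⟪y, A x - b⟫` is `1`-strongly convex, so its minimiser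
`x(y)` is unique and the Lagrangian grows at least like `½ ‖x - x(y)‖²` away from it. Adding this
growth at `x(y₁)` and at `x(y₂)` gives `‖x(y₁) - x(y₂)‖² ≤ ⟪y₂ - y₁, A (x(y₁) - x(y₂))⟫`, and with
`‖A h‖ ≤ ‖A‖ ‖h‖` this makes `y ↦ A x(y) - b` Lipschitz with constant `‖A‖²`, where `‖A‖` is the
operator norm `ℓᵖ → ℓ²`, so that `‖A‖² = L₂`. Since `φ` is a pointwise minimum of affine functions
of `y`, `A x(y) - b` is a supergradient of `φ` at `y`; a function with a continuous field of
supergradients is concave and differentiable with that gradient. For `p = 2`, a maximiser of the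
Rayleigh quotient of `AᵀA` on the unit sphere is an eigenvector with eigenvalue `‖A‖²`; for `p = 1`,
an operator on `ℓ¹` attains its norm at a basis vector, i.e. at a column of `A`.
-/

open BigOperators Matrix
open Set Filter Topology Module.End
open scoped RealInnerProductSpace ENNReal
open WithLp (toLp ofLp)

section Supergradient

variable {F : Type*} [NormedAddCommGroup F] [InnerProductSpace ℝ F] {f : F → ℝ} {G : F → F}

theorem concaveOn_univ_of_le_add_inner (hG : ∀ y y', f y' ≤ f y + ⟪G y, y' - y⟫) :
    ConcaveOn ℝ univ f := by
  refine ⟨convex_univ, fun y₁ _ y₂ _ a b ha hb hab => ?_⟩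
  set y := a • y₁ + b • y₂
  have hcomb : a • (y₁ - y) + b • (y₂ - y) = 0 := by
    obtain rfl : b = 1 - a := eq_sub_of_add_eq' hab
    module
  calc a • f y₁ + b • f y₂ ≤ a * (f y + ⟪G y, y₁ - y⟫) + b * (f y + ⟪G y, y₂ - y⟫) := by
        simp only [smul_eq_mul]; gcongr <;> exact hG _ _
    _ = (a + b) * f y + ⟪G y, a • (y₁ - y) + b • (y₂ - y)⟫ := by
        rw [inner_add_right, real_inner_smul_right, real_inner_smul_right]; ring
    _ = f y := by rw [hab, hcomb, inner_zero_right, one_mul, add_zero]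

theorem hasGradientAt_of_le_add_inner [CompleteSpace F]
    (hG : ∀ y y', f y' ≤ f y + ⟪G y, y' - y⟫) {y : F} (hGy : ContinuousAt G y) :
    HasGradientAt f (G y) y := by
  -- the error term lies between `⟪G y' - G y, y' - y⟫` and `0`
  have hbound : ∀ y', ‖f y' - f y - ⟪G y, y' - y⟫‖ ≤ ‖G y' - G y‖ * ‖y' - y‖ := by
    intro y'
    have h₁ := hG y y'
    have h₂ := hG y' y
    rw [← neg_sub y' y, inner_neg_right] at h₂
    have hcs := abs_le.1 (abs_real_inner_le_norm (G y' - G y) (y' - y))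
    rw [inner_sub_left] at hcs
    rw [Real.norm_eq_abs, abs_le]
    constructor <;> linarith [mul_nonneg (norm_nonneg (G y' - G y)) (norm_nonneg (y' - y))]
  rw [hasGradientAt_iff_isLittleO, Asymptotics.isLittleO_iff]
  intro c hc
  filter_upwards [hGy.eventually (Metric.closedBall_mem_nhds (G y) hc)] with y' hy'
  exact (hbound y').trans (by gcongr; rwa [← dist_eq_norm])

end Supergradient

section StrongConvexity

variable {E : Type*} [NormedAddCommGroup E] [NormedSpace ℝ E] {s : Set E} {m : ℝ} {f g : E → ℝ}
  {x₀ x : E}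

theorem StrongConvexOn.add_convexOn (hf : StrongConvexOn s m f) (hg : ConvexOn ℝ s g) :
    StrongConvexOn s m (f + g) := by
  have := hf.add (uniformConvexOn_zero.2 hg)
  rwa [add_zero] at this

theorem StrongConvexOn.add_sq_le_of_isMinOn (hf : StrongConvexOn s m f) (hmin : IsMinOn f s x₀)
    (hx₀ : x₀ ∈ s) (hx : x ∈ s) : f x₀ + m / 2 * ‖x - x₀‖ ^ 2 ≤ f x := by
  have hsegment : ∀ t ∈ Ioo (0 : ℝ) 1, f x₀ + (1 - t) * (m / 2 * ‖x - x₀‖ ^ 2) ≤ f x := by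
    rintro t ⟨ht₀, ht₁⟩
    have hmem := hf.1 hx hx₀ ht₀.le (sub_nonneg.2 ht₁.le) (add_sub_cancel t 1)
    have hconv := hf.2 hx hx₀ ht₀.le (sub_nonneg.2 ht₁.le) (add_sub_cancel t 1)
    have hle : f x₀ ≤ f (t • x + (1 - t) • x₀) := hmin hmem
    simp only [smul_eq_mul] at hconv
    refine le_of_mul_le_mul_left ?_ ht₀
    linear_combination hle.trans hconv
  have hlim : Tendsto (fun t : ℝ => f x₀ + (1 - t) * (m / 2 * ‖x - x₀‖ ^ 2)) (𝓝[>] 0)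
      (𝓝 (f x₀ + m / 2 * ‖x - x₀‖ ^ 2)) := by
    have : Continuous fun t : ℝ => f x₀ + (1 - t) * (m / 2 * ‖x - x₀‖ ^ 2) := by fun_prop
    simpa using this.continuousWithinAt.tendsto (s := Ioi 0) (x := 0)
  exact le_of_tendsto hlim (eventually_of_mem (Ioo_mem_nhdsGT one_pos) hsegment)

theorem StrongConvexOn.eq_of_le_of_isMinOn (hf : StrongConvexOn s m f) (hm : 0 < m)
    (hmin : IsMinOn f s x₀) (hx₀ : x₀ ∈ s) (hx : x ∈ s) (hle : f x ≤ f x₀) : x = x₀ :=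
  (hf.strictConvexOn hm).eq_of_isMinOn (fun _ hz => hle.trans (hmin hz)) hmin hx hx₀

end StrongConvexity

section Duality

variable {E F : Type*} [NormedAddCommGroup E] [NormedSpace ℝ E] [NormedAddCommGroup F]
  [InnerProductSpace ℝ F] {Q : Set E} {g : E → ℝ} {m : ℝ} {A : E →L[ℝ] F} {b : F} {xmin : F → E}

theorem le_add_inner_of_isMinOn (hmem : ∀ y, xmin y ∈ Q)
    (hmin : ∀ y, IsMinOn (fun x => g x + ⟪y, A x - b⟫) Q (xmin y)) (y y' : F) :
    g (xmin y') + ⟪y', A (xmin y') - b⟫ ≤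
      g (xmin y) + ⟪y, A (xmin y) - b⟫ + ⟪A (xmin y) - b, y' - y⟫ := by
  calc g (xmin y') + ⟪y', A (xmin y') - b⟫ ≤ g (xmin y) + ⟪y', A (xmin y) - b⟫ := hmin y' (hmem y)
    _ = _ := by rw [real_inner_comm (y' - y), inner_sub_left]; ring

theorem StrongConvexOn.add_inner_sub (hg : StrongConvexOn Q m g) (A : E →L[ℝ] F) (b y : F) :
    StrongConvexOn Q m (fun x => g x + ⟪y, A x - b⟫) := by
  refine hg.add_convexOn ?_
  simp_rw [inner_sub_right, sub_eq_add_neg]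
  exact (((innerSL ℝ y).comp A : E →L[ℝ] ℝ) : E →ₗ[ℝ] ℝ).convexOn hg.1 |>.add_const _

theorem StrongConvexOn.mul_sq_norm_sub_le_inner (hg : StrongConvexOn Q m g) (hmem : ∀ y, xmin y ∈ Q)
    (hmin : ∀ y, IsMinOn (fun x => g x + ⟪y, A x - b⟫) Q (xmin y)) (y₁ y₂ : F) :
    m * ‖xmin y₁ - xmin y₂‖ ^ 2 ≤ ⟪y₂ - y₁, A (xmin y₁ - xmin y₂)⟫ := by
  have h₁ := (hg.add_inner_sub A b y₁).add_sq_le_of_isMinOn (hmin y₁) (hmem y₁) (hmem y₂)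
  have h₂ := (hg.add_inner_sub A b y₂).add_sq_le_of_isMinOn (hmin y₂) (hmem y₂) (hmem y₁)
  rw [norm_sub_rev] at h₁
  simp only [map_sub, inner_sub_left, inner_sub_right] at h₁ h₂ ⊢
  linarith

theorem StrongConvexOn.lipschitzWith_apply_sub (hg : StrongConvexOn Q m g) (hm : 0 < m)
    (hmem : ∀ y, xmin y ∈ Q) (hmin : ∀ y, IsMinOn (fun x => g x + ⟪y, A x - b⟫) Q (xmin y)) :
    LipschitzWith (‖A‖ ^ 2 / m).toNNReal (fun y => A (xmin y) - b) := by
  refine LipschitzWith.of_dist_le' fun y₁ y₂ => ?_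
  set d := xmin y₁ - xmin y₂
  have hdist : dist (A (xmin y₁) - b) (A (xmin y₂) - b) = ‖A d‖ := by
    rw [dist_sub_right, dist_eq_norm, map_sub]
  have hmono : m * ‖d‖ ^ 2 ≤ ⟪y₂ - y₁, A d⟫ := hg.mul_sq_norm_sub_le_inner hmem hmin y₁ y₂
  have hcs := real_inner_le_norm (y₂ - y₁) (A d)
  rw [norm_sub_rev] at hcs
  have hA : ‖A d‖ ≤ ‖A‖ * ‖d‖ := A.le_opNorm d
  have key : ‖A d‖ * (m * ‖A d‖) ≤ ‖A d‖ * (‖A‖ ^ 2 * dist y₁ y₂) := by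
    calc ‖A d‖ * (m * ‖A d‖) = m * ‖A d‖ ^ 2 := by ring
      _ ≤ m * (‖A‖ * ‖d‖) ^ 2 := by gcongr
      _ = ‖A‖ ^ 2 * (m * ‖d‖ ^ 2) := by ring
      _ ≤ ‖A‖ ^ 2 * (‖y₁ - y₂‖ * ‖A d‖) := by gcongr ‖A‖ ^ 2 * ?_; exact hmono.trans hcs
      _ = ‖A d‖ * (‖A‖ ^ 2 * dist y₁ y₂) := by rw [dist_eq_norm]; ring
  rw [hdist, div_mul_eq_mul_div, le_div_iff₀ hm]
  rcases (norm_nonneg (A d)).eq_or_lt with h0 | hpos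
  · rw [← h0, zero_mul]; positivity
  · linarith [le_of_mul_le_mul_left key hpos]

end Duality

namespace ContinuousLinearMap

variable {E F : Type*} [NormedAddCommGroup E] [NormedSpace ℝ E] [NormedAddCommGroup F]
  [NormedSpace ℝ F]

theorem sSup_sq_norm_apply_unitClosedBall (T : E →L[ℝ] F) :
    sSup {w | ∃ h : E, ‖h‖ ≤ 1 ∧ w = ‖T h‖ ^ 2} = ‖T‖ ^ 2 := by
  refine IsLUB.csSup_eq ⟨?_, fun B hB => ?_⟩ ⟨0, 0, by simp, by simp⟩
  · rintro w ⟨h, hh, rfl⟩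
    gcongr
    exact T.unit_le_opNorm h hh
  · have hB₀ : 0 ≤ B := hB ⟨0, by simp, by simp⟩
    have hT : ‖T‖ ≤ √B := T.opNorm_le_of_unit_norm (Real.sqrt_nonneg B) fun h hh =>
      Real.le_sqrt_of_sq_le (hB ⟨h, hh.le, rfl⟩)
    calc ‖T‖ ^ 2 ≤ √B ^ 2 := by gcongr
      _ = B := Real.sq_sqrt hB₀

theorem isGreatest_norm_apply_single_of_L1 {ι : Type*} [Fintype ι] [DecidableEq ι] [Nonempty ι]
    (T : PiLp 1 (fun _ : ι => ℝ) →L[ℝ] F) :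
    IsGreatest (range fun k => ‖T (PiLp.single 1 k 1)‖) ‖T‖ := by
  obtain ⟨k₀, -, hk₀⟩ :=
    Finset.exists_max_image Finset.univ (fun k => ‖T (PiLp.single 1 k 1)‖) Finset.univ_nonempty
  have hle : ‖T‖ ≤ ‖T (PiLp.single 1 k₀ 1)‖ := by
    refine T.opNorm_le_bound (norm_nonneg _) fun h => ?_
    calc ‖T h‖ = ‖∑ j, h j • T (PiLp.single 1 j 1)‖ := by
          conv_lhs => rw [← (PiLp.basisFun 1 ℝ ι).sum_repr h]
          simp
      _ ≤ ∑ j, ‖h j‖ * ‖T (PiLp.single 1 j 1)‖ := norm_sum_le_of_le _ fun j _ => norm_smul_le _ _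
      _ ≤ ∑ j, ‖h j‖ * ‖T (PiLp.single 1 k₀ 1)‖ := by
          gcongr with j; exact hk₀ j (Finset.mem_univ j)
      _ = ‖T (PiLp.single 1 k₀ 1)‖ * ‖h‖ := by rw [← Finset.sum_mul, PiLp.norm_eq_of_L1, mul_comm]
  have hunit : ∀ k, ‖T (PiLp.single 1 k 1)‖ ≤ ‖T‖ := fun k =>
    T.unit_le_opNorm _ (by simp [PiLp.norm_single])
  exact ⟨⟨k₀, le_antisymm (hunit k₀) hle⟩, by rintro _ ⟨k, rfl⟩; exact hunit k⟩

end ContinuousLinearMap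

section LpCoordinates

variable {ι : Type*} [Fintype ι] {q : ℝ≥0∞}

theorem norm_toLp_eq_sum_abs_rpow (hq : 0 < q.toReal) (x : ι → ℝ) :
    ‖toLp q x‖ = (∑ j, |x j| ^ q.toReal) ^ (1 / q.toReal) := by
  simp [PiLp.norm_eq_sum hq]

theorem strongConvexOn_comp_ofLp [Fact (1 ≤ q)] {Q : Set (ι → ℝ)} {g : (ι → ℝ) → ℝ}
    (hq : 0 < q.toReal) (hQ : Convex ℝ Q)
    (hsc : ∀ x ∈ Q, ∀ y ∈ Q, ∀ t : ℝ, 0 ≤ t → t ≤ 1 →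
      g (t • x + (1 - t) • y) ≤ t * g x + (1 - t) * g y
        - 1 / 2 * t * (1 - t) * ((∑ j, |x j - y j| ^ q.toReal) ^ (1 / q.toReal)) ^ 2) :
    StrongConvexOn (ofLp ⁻¹' Q : Set (WithLp q (ι → ℝ))) 1 (g ∘ ofLp) := by
  refine ⟨hQ.linear_preimage (WithLp.linearEquiv q ℝ (ι → ℝ)).toLinearMap,
    fun x hx y hy a b ha hb hab => ?_⟩
  obtain rfl : b = 1 - a := eq_sub_of_add_eq' hab
  have := hsc _ hx _ hy a ha (by linarith)
  rw [← norm_toLp_eq_sum_abs_rpow hq, show toLp q (fun j => ofLp x j - ofLp y j) = x - y from rfl]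
    at this
  simp only [Function.comp_apply, smul_eq_mul, WithLp.ofLp_add, WithLp.ofLp_smul]
  linarith

end LpCoordinates

namespace Matrix

variable {ι κ : Type*} [Fintype ι] [DecidableEq ι] [Fintype κ]

noncomputable def toLpCLM (p q : ℝ≥0∞) [Fact (1 ≤ p)] [Fact (1 ≤ q)] (A : Matrix κ ι ℝ) :
    WithLp p (ι → ℝ) →L[ℝ] WithLp q (κ → ℝ) :=
  LinearMap.toContinuousLinearMap (toLpLin p q A)

section toLpCLM

variable {p q : ℝ≥0∞} [Fact (1 ≤ p)] [Fact (1 ≤ q)] (A : Matrix κ ι ℝ)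

@[simp]
theorem ofLp_toLpCLM (x : WithLp p (ι → ℝ)) : ofLp (A.toLpCLM p q x) = A *ᵥ ofLp x := rfl

theorem inner_toLpCLM_sub (b : κ → ℝ) (y : EuclideanSpace ℝ κ) (x : WithLp p (ι → ℝ)) :
    ⟪y, A.toLpCLM p 2 x - toLp 2 b⟫ = ∑ i, y i * ((A *ᵥ ofLp x) i - b i) := by
  simp [PiLp.inner_apply, mul_comm]

theorem sSup_sum_mulVec_sq_eq (hp : 0 < p.toReal) :
    sSup {w | ∃ h : ι → ℝ, (∑ j, |h j| ^ p.toReal) ^ (1 / p.toReal) ≤ 1 ∧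
      w = ∑ i, (A *ᵥ h) i ^ 2} = ‖A.toLpCLM p 2‖ ^ 2 := by
  rw [← ContinuousLinearMap.sSup_sq_norm_apply_unitClosedBall]
  congr 1
  ext w
  constructor
  · rintro ⟨h, hh, rfl⟩
    refine ⟨toLp p h, by rwa [norm_toLp_eq_sum_abs_rpow hp], ?_⟩
    simp [EuclideanSpace.real_norm_sq_eq]
  · rintro ⟨h, hh, rfl⟩
    refine ⟨ofLp h, by rwa [← norm_toLp_eq_sum_abs_rpow hp], ?_⟩
    simp [EuclideanSpace.real_norm_sq_eq]

end toLpCLM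

theorem hasEigenvalue_toLin'_iff_toLpLin {𝕜 : Type*} [RCLike 𝕜] (M : Matrix ι ι 𝕜) (p : ℝ≥0∞)
    {μ : 𝕜} : HasEigenvalue (toLin' M) μ ↔ HasEigenvalue (toLpLin p p M) μ := by
  rw [hasEigenvalue_iff_mem_spectrum, hasEigenvalue_iff_mem_spectrum, spectrum_toLin',
    spectrum_toLpLin]

theorem reApplyInnerSelf_toEuclideanCLM_transpose_mul_self (A : Matrix κ ι ℝ)
    (x : EuclideanSpace ℝ ι) :
    (toEuclideanCLM (𝕜 := ℝ) (Aᵀ * A)).reApplyInnerSelf x = ‖A.toLpCLM 2 2 x‖ ^ 2 := by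
  rw [ContinuousLinearMap.reApplyInnerSelf_apply, RCLike.re_to_real, real_inner_comm,
    inner_toEuclideanCLM, ← real_inner_self_eq_norm_sq, EuclideanSpace.inner_eq_star_dotProduct]
  simp [← mulVec_mulVec, dotProduct_mulVec, vecMul_transpose, dotProduct_comm]

theorem isGreatest_hasEigenvalue_transpose_mul_self [Nonempty ι] (A : Matrix κ ι ℝ) :
    IsGreatest {μ | HasEigenvalue (toLin' (Aᵀ * A)) μ} (‖A.toLpCLM 2 2‖ ^ 2) := by
  set T := A.toLpCLM 2 2
  let S := toEuclideanCLM (𝕜 := ℝ) (Aᵀ * A)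
  have hS : IsSelfAdjoint S := by
    have := isHermitian_conjTranspose_mul_self A
    rw [conjTranspose_eq_transpose_of_trivial] at this
    exact this.isSelfAdjoint.map _
  have hre : ∀ x, S.reApplyInnerSelf x = ‖T x‖ ^ 2 :=
    reApplyInnerSelf_toEuclideanCLM_transpose_mul_self A
  have heig : ∀ μ, HasEigenvalue (toLin' (Aᵀ * A)) μ ↔
      HasEigenvalue (toEuclideanCLM (𝕜 := ℝ) (Aᵀ * A) : EuclideanSpace ℝ ι →ₗ[ℝ] _) μ :=
    fun μ => by
      rw [coe_toEuclideanCLM_eq_toEuclideanLin]; exact hasEigenvalue_toLin'_iff_toLpLin _ 2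
  simp only [heig]
  -- a maximiser of the Rayleigh quotient on the unit sphere is a top eigenvector
  obtain ⟨x₀, hx₀, hmax⟩ := (isCompact_sphere (0 : EuclideanSpace ℝ ι) 1).exists_isMaxOn
    (NormedSpace.sphere_nonempty.2 zero_le_one) S.reApplyInnerSelf_continuous.continuousOn
  rw [mem_sphere_zero_iff_norm] at hx₀
  have hnorm : ‖T‖ = ‖T x₀‖ := by
    refine le_antisymm (T.opNorm_le_of_unit_norm (norm_nonneg _) fun x hx => ?_)
      (T.unit_le_opNorm x₀ hx₀.le)
    have : S.reApplyInnerSelf x ≤ S.reApplyInnerSelf x₀ := hmax (mem_sphere_zero_iff_norm.2 hx)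
    rw [hre, hre] at this
    exact (pow_le_pow_iff_left₀ (norm_nonneg _) (norm_nonneg _) two_ne_zero).1 this
  refine ⟨?_, fun μ hμ => ?_⟩
  · have hx₀ne : x₀ ≠ 0 := by rintro rfl; simp at hx₀
    have := hS.hasEigenvector_of_isLocalExtrOn hx₀ne (.inr (by rw [hx₀]; exact hmax.localize))
    rw [show S.rayleighQuotient x₀ = ‖T‖ ^ 2 by
      rw [ContinuousLinearMap.rayleighQuotient, hre, hx₀, hnorm, one_pow, div_one]] at this
    exact hasEigenvalue_of_hasEigenvector this
  · obtain ⟨v, hv⟩ := hμ.exists_hasEigenvector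
    have hSv : S v = μ • v := hv.apply_eq_smul
    have hv₀ : 0 < ‖v‖ := norm_pos_iff.2 hv.2
    have key : μ * ‖v‖ ^ 2 = ‖T v‖ ^ 2 := by
      rw [← hre, ContinuousLinearMap.reApplyInnerSelf_apply, hSv, real_inner_smul_left,
        real_inner_self_eq_norm_sq, RCLike.re_to_real]
    have : μ * ‖v‖ ^ 2 ≤ ‖T‖ ^ 2 * ‖v‖ ^ 2 := by
      rw [key, ← mul_pow]; gcongr; exact T.le_opNorm v
    exact le_of_mul_le_mul_right this (by positivity)

theorem isGreatest_sum_sq_col [Nonempty ι] (A : Matrix κ ι ℝ) :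
    IsGreatest {w | ∃ k, w = ∑ i, A i k ^ 2} (‖A.toLpCLM 1 2‖ ^ 2) := by
  obtain ⟨⟨k₀, hk₀⟩, hmax⟩ := (A.toLpCLM 1 2).isGreatest_norm_apply_single_of_L1
  have hcol : ∀ k, ‖A.toLpCLM 1 2 (PiLp.single 1 k 1)‖ ^ 2 = ∑ i, A i k ^ 2 := fun k => by
    simp [EuclideanSpace.real_norm_sq_eq, ← PiLp.toLp_single]
  refine ⟨⟨k₀, by rw [← hk₀, hcol]⟩, ?_⟩
  rintro _ ⟨k, rfl⟩
  rw [← hcol]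
  gcongr
  exact hmax ⟨k, rfl⟩

end Matrix

theorem dual_function_smoothness_general (m n : ℕ) (hn : 0 < n)
    (A : Matrix (Fin m) (Fin n) ℝ) (b : Fin m → ℝ)
    (p : ℝ) (hp : p = 1 ∨ p = 2)
    (Q : Set (Fin n → ℝ)) (hQconv : Convex ℝ Q)
    (g : (Fin n → ℝ) → ℝ)
    (hsc : ∀ x ∈ Q, ∀ y ∈ Q, ∀ t : ℝ, 0 ≤ t → t ≤ 1 →
      g (t • x + (1 - t) • y) ≤ t * g x + (1 - t) * g y
        - 1 / 2 * t * (1 - t) * ((∑ j, |x j - y j| ^ p) ^ (1 / p)) ^ 2)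
    (xmin : (Fin m → ℝ) → (Fin n → ℝ))
    (hxmin_mem : ∀ y, xmin y ∈ Q)
    (hxmin_min : ∀ y : Fin m → ℝ, ∀ x ∈ Q,
      g (xmin y) + (∑ i, y i * (A.mulVec (xmin y) i - b i))
        ≤ g x + (∑ i, y i * (A.mulVec x i - b i)))
    (φ : EuclideanSpace ℝ (Fin m) → ℝ)
    (hφ : ∀ y : EuclideanSpace ℝ (Fin m),
      φ y = sInf {v : ℝ | ∃ x ∈ Q,
        v = g x + ∑ i, y i * (A.mulVec x i - b i)})
    (L2 : ℝ)
    (hL2 : L2 = sSup {w : ℝ | ∃ h : Fin n → ℝ,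
      (∑ j, |h j| ^ p) ^ (1 / p) ≤ 1 ∧ w = ∑ i, (A.mulVec h i) ^ 2}) :
    (∀ y : Fin m → ℝ, ∀ x ∈ Q,
      (g x + (∑ i, y i * (A.mulVec x i - b i))
        = g (xmin y) + ∑ i, y i * (A.mulVec (xmin y) i - b i)) → x = xmin y) ∧
    ConcaveOn ℝ Set.univ φ ∧
    (∀ y : EuclideanSpace ℝ (Fin m),
      HasGradientAt φ
        ((WithLp.equiv 2 (Fin m → ℝ)).symm
          (fun i => A.mulVec (xmin y) i - b i)) y) ∧
    LipschitzWith (Real.toNNReal L2)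
      (fun y : EuclideanSpace ℝ (Fin m) =>
        (WithLp.equiv 2 (Fin m → ℝ)).symm
          (fun i => A.mulVec (xmin y) i - b i)) ∧
    (p = 2 → IsGreatest
      {μ : ℝ | Module.End.HasEigenvalue (Matrix.toLin' (Aᵀ * A)) μ} L2) ∧
    (p = 1 → IsGreatest {w : ℝ | ∃ k : Fin n, w = ∑ i, (A i k) ^ 2} L2) := by
  -- `p` becomes an exponent `q : ℝ≥0∞`, so that the `p`-norm is the norm of `WithLp q (Fin n → ℝ)`
  obtain ⟨q, hq, rfl⟩ : ∃ q : ℝ≥0∞, (q = 1 ∨ q = 2) ∧ q.toReal = p := by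
    rcases hp with rfl | rfl
    exacts [⟨1, .inl rfl, by simp⟩, ⟨2, .inr rfl, by simp⟩]
  have : Fact (1 ≤ q) := ⟨by rcases hq with rfl | rfl <;> norm_num⟩
  have hq₀ : 0 < q.toReal := by rcases hq with rfl | rfl <;> norm_num
  have : NeZero n := ⟨hn.ne'⟩
  have hg := strongConvexOn_comp_ofLp hq₀ hQconv hsc
  have hmin (y : EuclideanSpace ℝ (Fin m)) : IsMinOn
      (fun x => (g ∘ ofLp) x + ⟪y, A.toLpCLM q 2 x - toLp 2 b⟫) (ofLp ⁻¹' Q) (toLp q (xmin y)) :=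
    isMinOn_iff.2 fun x hx => by
      simpa only [Function.comp_apply, WithLp.ofLp_toLp, inner_toLpCLM_sub] using hxmin_min y _ hx
  obtain rfl : φ = fun y : EuclideanSpace ℝ (Fin m) => (g ∘ ofLp) (toLp q (xmin y)) +
      ⟪y, A.toLpCLM q 2 (toLp q (xmin y)) - toLp 2 b⟫ := funext fun y => by
    simp only [hφ, Function.comp_apply, inner_toLpCLM_sub]
    exact IsLeast.csInf_eq
      ⟨⟨xmin y, hxmin_mem y, rfl⟩, by rintro _ ⟨x, hx, rfl⟩; exact hxmin_min y x hx⟩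
  have hmem (y : EuclideanSpace ℝ (Fin m)) : toLp q (xmin y) ∈ ofLp ⁻¹' Q := hxmin_mem _
  have hsuper := le_add_inner_of_isMinOn hmem hmin
  have hlip := hg.lipschitzWith_apply_sub one_pos hmem hmin
  rw [hL2, sSup_sum_mulVec_sq_eq A hq₀]
  refine ⟨fun y x hx heq => ?_, concaveOn_univ_of_le_add_inner hsuper,
    fun y => hasGradientAt_of_le_add_inner hsuper hlip.continuous.continuousAt,
    by rwa [div_one] at hlip, fun h2 => ?_, fun h1 => ?_⟩
  · refine congrArg ofLp <| (hg.add_inner_sub (A.toLpCLM q 2) (toLp 2 b) (toLp 2 y))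
      |>.eq_of_le_of_isMinOn one_pos (hmin (toLp 2 y)) (hmem _) (x := toLp q x) hx ?_
    simpa only [Function.comp_apply, WithLp.ofLp_toLp, inner_toLpCLM_sub] using heq.le
  · obtain rfl : q = 2 := hq.resolve_left (by rintro rfl; norm_num at h2)
    exact isGreatest_hasEigenvalue_transpose_mul_self A
  · obtain rfl : q = 1 := hq.resolve_right (by rintro rfl; norm_num at h1)
    exact A.isGreatest_sum_sq_col

/-- If `g` is 1-strongly convex in the `p`-norm (`p ∈ {1,2}`) on compact convex `Q`,
then the dual function `φ(y) = min_{x∈Q} {g(x) + ⟨y, Ax-b⟩}` is concave and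
differentiable with `∇φ(y) = A x(y) - b` for the unique minimizer `x(y)`, and the
gradient is Lipschitz in the 2-norm with constant `L₂ = max_{‖h‖_p≤1} ‖Ah‖₂²`;
for `p = 2` this is `σ_max(A)` and for `p = 1` it is `max_k ‖A^{(k)}‖₂²`. -/
theorem dual_function_smoothness (m n : ℕ) (hn : 0 < n)
    (A : Matrix (Fin m) (Fin n) ℝ) (b : Fin m → ℝ)
    (p : ℝ) (hp : p = 1 ∨ p = 2)
    (Q : Set (Fin n → ℝ)) (hQne : Q.Nonempty) (hQcomp : IsCompact Q)
    (hQconv : Convex ℝ Q)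
    (g : (Fin n → ℝ) → ℝ) (hgcont : ContinuousOn g Q)
    (hsc : ∀ x ∈ Q, ∀ y ∈ Q, ∀ t : ℝ, 0 ≤ t → t ≤ 1 →
      g (t • x + (1 - t) • y) ≤ t * g x + (1 - t) * g y
        - 1 / 2 * t * (1 - t) * ((∑ j, |x j - y j| ^ p) ^ (1 / p)) ^ 2)
    (xmin : (Fin m → ℝ) → (Fin n → ℝ))
    (hxmin_mem : ∀ y, xmin y ∈ Q)
    (hxmin_min : ∀ y : Fin m → ℝ, ∀ x ∈ Q,
      g (xmin y) + (∑ i, y i * (A.mulVec (xmin y) i - b i))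
        ≤ g x + (∑ i, y i * (A.mulVec x i - b i)))
    (φ : EuclideanSpace ℝ (Fin m) → ℝ)
    (hφ : ∀ y : EuclideanSpace ℝ (Fin m),
      φ y = sInf {v : ℝ | ∃ x ∈ Q,
        v = g x + ∑ i, y i * (A.mulVec x i - b i)})
    (L2 : ℝ)
    (hL2 : L2 = sSup {w : ℝ | ∃ h : Fin n → ℝ,
      (∑ j, |h j| ^ p) ^ (1 / p) ≤ 1 ∧ w = ∑ i, (A.mulVec h i) ^ 2}) :
    (∀ y : Fin m → ℝ, ∀ x ∈ Q,
      (g x + (∑ i, y i * (A.mulVec x i - b i))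
        = g (xmin y) + ∑ i, y i * (A.mulVec (xmin y) i - b i)) → x = xmin y) ∧
    ConcaveOn ℝ Set.univ φ ∧
    (∀ y : EuclideanSpace ℝ (Fin m),
      HasGradientAt φ
        ((WithLp.equiv 2 (Fin m → ℝ)).symm
          (fun i => A.mulVec (xmin y) i - b i)) y) ∧
    LipschitzWith (Real.toNNReal L2)
      (fun y : EuclideanSpace ℝ (Fin m) =>
        (WithLp.equiv 2 (Fin m → ℝ)).symm
          (fun i => A.mulVec (xmin y) i - b i)) ∧
    (p = 2 → IsGreatest
      {μ : ℝ | Module.End.HasEigenvalue (Matrix.toLin' (Aᵀ * A)) μ} L2) ∧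
    (p = 1 → IsGreatest {w : ℝ | ∃ k : Fin n, w = ∑ i, (A i k) ^ 2} L2) :=
  dual_function_smoothness_general m n hn A b p hp Q hQconv g hsc xmin hxmin_mem hxmin_min φ hφ L2
    hL2
end

section
/- Certificate bound: with notation as above, if F(ỹ_k) + g(x_k) + 2R̃‖Ax_k − b‖₂ ≤ γ, where R̃ ≥ max(‖ỹ_k‖₂, ‖y_*‖₂), then both |g(x_k) − g(x_*)| ≤ γ and R̃‖Ax_k − b‖₂ ≤ γ hold. -/
open BigOperators

/-! The dual value at any `y` is at least the Lagrangian at `x_k`, and by Cauchy–Schwarz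
`⟨y, b - A x_k⟩ ≥ -R̃ ‖A x_k - b‖` whenever `‖y‖ ≤ R̃`. Applied to `ỹ_k`, this turns the
certificate into `R̃ ‖A x_k - b‖ ≤ γ`; applied to `y⋆` together with the zero duality gap it gives
`g(x⋆) - g(x_k) ≤ R̃ ‖A x_k - b‖`, while minimality of `y⋆` gives `g(x_k) - g(x⋆) ≤ γ`. -/

lemma le_sSup_of_isCompact {X : Type*} [TopologicalSpace X] {Q : Set X} (hQ : IsCompact Q)
    {φ : X → ℝ} (hφ : ContinuousOn φ Q) {x : X} (hx : x ∈ Q) :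
    φ x ≤ sSup {w : ℝ | ∃ x ∈ Q, w = φ x} :=
  le_csSup ((hQ.bddAbove_image hφ).mono (by rintro _ ⟨x, hx, rfl⟩; exact ⟨x, hx, rfl⟩))
    ⟨x, hx, rfl⟩

lemma neg_mul_sqrt_le_sum_mul_sub {ι : Type*} (s : Finset ι) {y : ι → ℝ} {R : ℝ}
    (hy : √(∑ i ∈ s, y i ^ 2) ≤ R) (u v : ι → ℝ) :
    -(R * √(∑ i ∈ s, (u i - v i) ^ 2)) ≤ ∑ i ∈ s, y i * (v i - u i) := by
  have hCS := Real.sum_mul_le_sqrt_mul_sqrt s y (fun i => u i - v i)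
  have hflip : ∑ i ∈ s, y i * (v i - u i) = -∑ i ∈ s, y i * (u i - v i) := by
    rw [← Finset.sum_neg_distrib]
    exact Finset.sum_congr rfl fun i _ => by ring
  have hR := mul_le_mul_of_nonneg_right hy (Real.sqrt_nonneg (∑ i ∈ s, (u i - v i) ^ 2))
  linarith

lemma neg_mul_sqrt_sub_le_dual {m n : ℕ} (A : Matrix (Fin m) (Fin n) ℝ) (b : Fin m → ℝ)
    {Q : Set (Fin n → ℝ)} (hQ : IsCompact Q) {g : (Fin n → ℝ) → ℝ} (hg : ContinuousOn g Q)
    {x : Fin n → ℝ} (hx : x ∈ Q) {y : Fin m → ℝ} {R : ℝ} (hy : √(∑ i, y i ^ 2) ≤ R) :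
    -(R * √(∑ i, (A.mulVec x i - b i) ^ 2)) - g x ≤
      sSup {w : ℝ | ∃ x ∈ Q, w = (∑ i, y i * (b i - A.mulVec x i)) - g x} := by
  have hLagrangian : ContinuousOn (fun x => (∑ i, y i * (b i - A.mulVec x i)) - g x) Q :=
    ContinuousOn.sub (by fun_prop) hg
  have hdual := le_sSup_of_isCompact hQ hLagrangian hx
  have hCS := neg_mul_sqrt_le_sum_mul_sub Finset.univ hy (A.mulVec x) b
  linarith

theorem certificate_bound_general (m n : ℕ) (A : Matrix (Fin m) (Fin n) ℝ) (b : Fin m → ℝ)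
    (Q : Set (Fin n → ℝ)) (hQcomp : IsCompact Q)
    (g : (Fin n → ℝ) → ℝ) (hgcont : ContinuousOn g Q)
    (F : (Fin m → ℝ) → ℝ)
    (hF : ∀ y, F y = sSup {w : ℝ | ∃ x ∈ Q,
      w = (∑ i, y i * (b i - A.mulVec x i)) - g x})
    (xstar : Fin n → ℝ)
    (ystar : Fin m → ℝ) (hystar_min : ∀ y : Fin m → ℝ, F ystar ≤ F y)
    (hgap : F ystar = -g xstar)
    (xk : Fin n → ℝ) (hxk : xk ∈ Q)
    (yk : Fin m → ℝ) (Rt γ : ℝ)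
    (hyk : Real.sqrt (∑ i, (yk i) ^ 2) ≤ Rt)
    (hys : Real.sqrt (∑ i, (ystar i) ^ 2) ≤ Rt)
    (hcert : F yk + g xk + 2 * Rt * Real.sqrt (∑ i, (A.mulVec xk i - b i) ^ 2) ≤ γ) :
    |g xk - g xstar| ≤ γ ∧
    Rt * Real.sqrt (∑ i, (A.mulVec xk i - b i) ^ 2) ≤ γ := by
  have hdual_k := hF yk ▸ neg_mul_sqrt_sub_le_dual A b hQcomp hgcont hxk hyk
  have hdual_star := hF ystar ▸ neg_mul_sqrt_sub_le_dual A b hQcomp hgcont hxk hys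
  have hmin := hystar_min yk
  have hres : 0 ≤ Rt * Real.sqrt (∑ i, (A.mulVec xk i - b i) ^ 2) :=
    mul_nonneg ((Real.sqrt_nonneg _).trans hyk) (Real.sqrt_nonneg _)
  exact ⟨abs_le.2 ⟨by linarith, by linarith⟩, by linarith⟩

/-- Certificate bound: if `F(ỹ_k) + g(x_k) + 2R̃‖Ax_k - b‖₂ ≤ γ` with
`R̃ ≥ max(‖ỹ_k‖₂, ‖y⋆‖₂)` and zero duality gap `F(y⋆) = -g(x⋆)`, then both
`|g(x_k) - g(x⋆)| ≤ γ` and `R̃‖Ax_k - b‖₂ ≤ γ`. -/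
theorem certificate_bound (m n : ℕ) (A : Matrix (Fin m) (Fin n) ℝ) (b : Fin m → ℝ)
    (Q : Set (Fin n → ℝ)) (hQcomp : IsCompact Q) (hQconv : Convex ℝ Q)
    (g : (Fin n → ℝ) → ℝ) (hgcont : ContinuousOn g Q) (hgconv : ConvexOn ℝ Q g)
    (F : (Fin m → ℝ) → ℝ)
    (hF : ∀ y, F y = sSup {w : ℝ | ∃ x ∈ Q,
      w = (∑ i, y i * (b i - A.mulVec x i)) - g x})
    (xstar : Fin n → ℝ) (hxstar_mem : xstar ∈ Q) (hxstar_feas : A.mulVec xstar = b)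
    (hxstar_min : ∀ x ∈ Q, A.mulVec x = b → g xstar ≤ g x)
    (ystar : Fin m → ℝ) (hystar_min : ∀ y : Fin m → ℝ, F ystar ≤ F y)
    (hgap : F ystar = -g xstar)
    (xk : Fin n → ℝ) (hxk : xk ∈ Q)
    (yk : Fin m → ℝ) (Rt γ : ℝ)
    (hyk : Real.sqrt (∑ i, (yk i) ^ 2) ≤ Rt)
    (hys : Real.sqrt (∑ i, (ystar i) ^ 2) ≤ Rt)
    (hcert : F yk + g xk + 2 * Rt * Real.sqrt (∑ i, (A.mulVec xk i - b i) ^ 2) ≤ γ) :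
    |g xk - g xstar| ≤ γ ∧
    Rt * Real.sqrt (∑ i, (A.mulVec xk i - b i) ^ 2) ≤ γ :=
  certificate_bound_general m n A b Q hQcomp g hgcont F hF xstar ystar hystar_min hgap xk hxk yk Rt
    γ hyk hys hcert
end
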